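/- Let A be an associative algebra with 1 over a field of characteristic zero, with center C, and let ∂ = (∂^1,...,∂^{n'}) and δ = (δ^1,...,δ^n) each be commuting families of derivations of A with ∂ = gδ for a matrix g with entries g^i_j ∈ C satisfying ∂^k g^i_j = ∂^i g^k_j for all i,k,j. Then for m = 2: ∂^{⊙2}/2! = (g ⊙ (∂⊙g)/2!)·δ + (g^{⊙2}/2!)·(δ^{⊙2}/2!), where ⊙ is the symmetric product of matrices and · is ordinary matrix multiplication. -/

import Mathlib

open Finset

/-- The weight `|α| = α₁ + ⋯ + αₙ` of a multi-index. -/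
def wt {n : ℕ} (α : Fin n → ℕ) : ℕ := ∑ i, α i

/-- The multi-index binomial coefficient `C(α, β)`. -/
def mchoose {n : ℕ} (α β : Fin n → ℕ) : ℕ := ∏ i, (α i).choose (β i)

/-- The multi-index factorial `α! = α₁!⋯αₙ!`. -/
def mfact {n : ℕ} (α : Fin n → ℕ) : ℕ := ∏ i, (α i).factorial

/-- The symmetric product `A ⊙ B` of multi-index matrices with entries in a ring. -/
def symProd {A : Type*} [Ring A] {n' n : ℕ} (p' p : ℕ)
    (M N : (Fin n' → ℕ) → (Fin n → ℕ) → A) :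
    (Fin n' → ℕ) → (Fin n → ℕ) → A :=
  fun α' α => ∑ β' ∈ Finset.Iic α', ∑ β ∈ Finset.Iic α,
    if wt β' = p' ∧ wt β = p then
      (mchoose α β : A) * M β' β * N (α' - β') (α - β)
    else 0

/-- The finite set of multi-indices in `I_n` of weight `w`. -/
def wtSet (n w : ℕ) : Finset (Fin n → ℕ) :=
  (Finset.Iic (fun _ => w : Fin n → ℕ)).filter (fun β => wt β = w)

/-- The iterated operator `∂^α = (∂^1)^{α₁} ∘ ⋯ ∘ (∂^{n'})^{α_{n'}}`. -/
def dpow {A : Type*} {n' : ℕ} (D : Fin n' → A → A) (α : Fin n' → ℕ) : A → A :=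
  (List.ofFn fun i => (D i)^[α i]).foldr (· ∘ ·) id

/-- A matrix `g = (gⁱⱼ)` viewed as an element of `M(1,1)` over multi-indices. -/
def embedg {A : Type*} [Ring A] {n' n : ℕ} (g : Fin n' → Fin n → A) :
    (Fin n' → ℕ) → (Fin n → ℕ) → A :=
  fun α' α => ∑ i, ∑ j,
    if α' = Pi.single i 1 ∧ α = Pi.single j 1 then g i j else 0

/-- The entry of `∂ ⊙ g ∈ M(2,1)` at row `α'` (of weight 2) and column `eⱼ`:
the derivations applied to the entries of `g`, combined via the symmetric product. -/
def dgEntry {A : Type*} [Ring A] {n' n : ℕ} (D : Fin n' → A → A)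
    (g : Fin n' → Fin n → A) (α' : Fin n' → ℕ) (j : Fin n) : A :=
  ∑ i, ∑ k, if α' = Pi.single i 1 + Pi.single k 1 then D i (g k j) else 0

theorem pair_eq_pair {n : ℕ} {i k i' k' : Fin n} :
    (Pi.single i 1 + Pi.single k 1 : Fin n → ℕ) = Pi.single i' 1 + Pi.single k' 1 ↔
      (i = i' ∧ k = k') ∨ (i = k' ∧ k = i') := by
  constructor
  · intro h
    by_cases hii' : i = i'
    · subst hii'
      exact Or.inl ⟨rfl, (by
        by_contra hne
        have := congrFun (add_left_cancel h) k
        simp [Pi.single_apply, Ne.symm hne] at this)⟩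
    · have hi := congrFun h i
      simp only [Pi.add_apply, Pi.single_apply, if_pos rfl] at hi
      rw [if_neg hii'] at hi
      have hik' : i = k' := by
        by_contra hne
        rw [if_neg hne] at hi
        split_ifs at hi <;> omega
      subst hik'
      rw [show (Pi.single i' 1 + Pi.single i 1 : Fin n → ℕ) = Pi.single i 1 + Pi.single i' 1
        from add_comm _ _] at h
      have h2 := add_left_cancel h
      have hk : k = i' := by
        by_contra hne
        have := congrFun h2 k
        simp [Pi.single_apply, Ne.symm hne] at this
      exact Or.inr ⟨rfl, hk⟩
  · rintro (⟨rfl, rfl⟩ | ⟨rfl, rfl⟩)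
    · rfl
    · exact add_comm _ _

lemma exists_ne_zero_of_wt {n : ℕ} {β : Fin n → ℕ} {w : ℕ} (h : wt β = w) (hw : w ≠ 0) :
    ∃ i, β i ≠ 0 := by
  by_contra hc
  push_neg at hc
  have : wt β = 0 := Finset.sum_eq_zero fun i _ => hc i
  omega

lemma eq_single_of_wt_eq_one {n : ℕ} {β : Fin n → ℕ} (h : wt β = 1) :
    ∃ i, β = Pi.single i 1 := by
  obtain ⟨i, hi⟩ := exists_ne_zero_of_wt h one_ne_zero
  have hsum : β i + ∑ j ∈ Finset.univ.erase i, β j = 1 := by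
    rw [Finset.add_sum_erase _ _ (Finset.mem_univ i)]; exact h
  have hβi : β i = 1 := by omega
  have hrest : ∑ j ∈ Finset.univ.erase i, β j = 0 := by omega
  refine ⟨i, funext fun j => ?_⟩
  by_cases hj : j = i
  · subst hj; simp [hβi]
  · have := (Finset.sum_eq_zero_iff.mp hrest) j (Finset.mem_erase.mpr ⟨hj, Finset.mem_univ j⟩)
    simp [this, Pi.single_apply, hj]

lemma exists_pair_of_wt_eq_two {n : ℕ} {β : Fin n → ℕ} (h : wt β = 2) :
    ∃ j l, β = Pi.single j 1 + Pi.single l 1 := by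
  obtain ⟨j, hj⟩ := exists_ne_zero_of_wt h two_ne_zero
  set γ : Fin n → ℕ := β - Pi.single j 1 with hγ
  have hβ : β = Pi.single j 1 + γ := by
    funext r
    by_cases hr : r = j
    · subst hr; simp [hγ, Pi.single_apply]; omega
    · simp [hγ, Pi.single_apply, hr]
  have hwt : wt γ = 1 := by
    have h2 := hβ ▸ h
    rw [show wt (Pi.single j 1 + γ) = wt (Pi.single j 1) + wt γ from by
      simp [wt, Finset.sum_add_distrib]] at h2
    simp only [wt, Finset.sum_pi_single', Finset.mem_univ, if_true] at h2 ⊢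
    omega
  obtain ⟨l, hl⟩ := eq_single_of_wt_eq_one hwt
  exact ⟨j, l, by rw [hβ, hl]⟩

section dpow
variable {A : Type*}

lemma dpow_zero' {m : ℕ} (D : Fin 0 → A → A) (α : Fin 0 → ℕ) (a : A) : dpow D α a = a := by
  simp [dpow]

lemma dpow_succ {m : ℕ} (D : Fin (m+1) → A → A) (α : Fin (m+1) → ℕ) (a : A) :
    dpow D α a = (D 0)^[α 0] (dpow (fun i => D i.succ) (fun i => α i.succ) a) := by
  simp [dpow, List.ofFn_succ, Function.comp]

lemma dpow_of_zero : ∀ {m : ℕ} (D : Fin m → A → A) (a : A), dpow D 0 a = a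
  | 0, D, a => by simp [dpow]
  | (m+1), D, a => by
      rw [dpow_succ]
      simp only [Pi.zero_apply, Function.iterate_zero, id_eq]
      exact dpow_of_zero (fun i => D i.succ) a

lemma single_succ_comp {m : ℕ} (i : Fin m) (p : ℕ) :
    (fun r : Fin m => (Pi.single i.succ p : Fin (m+1) → ℕ) r.succ) = Pi.single i p := by
  funext r
  simp [Pi.single_apply, Fin.succ_inj]

lemma single_zero_succ {m : ℕ} (p : ℕ) (r : Fin m) :
    (Pi.single (0 : Fin (m+1)) p : Fin (m+1) → ℕ) r.succ = 0 := by
  simp [Pi.single_apply, Fin.succ_ne_zero]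

lemma dpow_single : ∀ {m : ℕ} (D : Fin m → A → A) (i : Fin m) (p : ℕ) (a : A),
    dpow D (Pi.single i p) a = (D i)^[p] a
  | 0, _, i, _, _ => i.elim0
  | (m+1), D, i, p, a => by
      rw [dpow_succ]
      cases i using Fin.cases with
      | zero =>
          rw [show (fun r : Fin m => (Pi.single (0 : Fin (m+1)) p) r.succ) = 0 from
            funext fun r => single_zero_succ p r]
          rw [dpow_of_zero]
          simp
      | succ i =>
          rw [single_succ_comp, dpow_single (fun r => D r.succ) i p a]
          simp [Pi.single_apply, Fin.succ_ne_zero i]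

lemma dpow_pair : ∀ {m : ℕ} (D : Fin m → A → A)
    (_ : ∀ i j x, D i (D j x) = D j (D i x)) (i k : Fin m) (a : A),
    dpow D (Pi.single i 1 + Pi.single k 1) a = D i (D k a)
  | 0, _, _, i, _, _ => i.elim0
  | (m+1), D, hcomm, i, k, a => by
      rw [dpow_succ]
      have tailD : ∀ i j x, (fun r : Fin m => D r.succ) i ((fun r : Fin m => D r.succ) j x)
          = (fun r : Fin m => D r.succ) j ((fun r : Fin m => D r.succ) i x) :=
        fun i j x => hcomm i.succ j.succ x
      cases i using Fin.cases with
      | zero =>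
          cases k using Fin.cases with
          | zero =>
              have h1 : ((Pi.single (0:Fin (m+1)) 1 + Pi.single (0:Fin (m+1)) 1 : Fin (m+1) → ℕ)) 0 = 2 := by
                simp
              have h2 : (fun r : Fin m => (Pi.single (0:Fin (m+1)) 1 + Pi.single (0:Fin (m+1)) 1 : Fin (m+1) → ℕ) r.succ) = 0 := by
                funext r; simp [single_zero_succ]
              rw [h1, h2, dpow_of_zero]
              simp [Function.iterate_succ_apply']
          | succ k =>
              have h1 : ((Pi.single (0:Fin (m+1)) 1 + Pi.single k.succ 1 : Fin (m+1) → ℕ)) 0 = 1 := by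
                simp [Pi.single_apply, (Fin.succ_ne_zero k)]
              have h2 : (fun r : Fin m => (Pi.single (0:Fin (m+1)) 1 + Pi.single k.succ 1 : Fin (m+1) → ℕ) r.succ)
                  = Pi.single k 1 := by
                funext r
                simp [single_zero_succ, Pi.single_apply, Fin.succ_inj, Fin.succ_ne_zero]
              rw [h1, h2, dpow_single]
              simp
      | succ i =>
          cases k using Fin.cases with
          | zero =>
              have h1 : ((Pi.single i.succ 1 + Pi.single (0:Fin (m+1)) 1 : Fin (m+1) → ℕ)) 0 = 1 := by
                simp [Pi.single_apply, (Fin.succ_ne_zero i)]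
              have h2 : (fun r : Fin m => (Pi.single i.succ 1 + Pi.single (0:Fin (m+1)) 1 : Fin (m+1) → ℕ) r.succ)
                  = Pi.single i 1 := by
                funext r
                simp [single_zero_succ, Pi.single_apply, Fin.succ_inj, Fin.succ_ne_zero]
              rw [h1, h2, dpow_single]
              simpa using (hcomm 0 i.succ a)
          | succ k =>
              have h1 : ((Pi.single i.succ 1 + Pi.single k.succ 1 : Fin (m+1) → ℕ)) 0 = 0 := by
                simp [Pi.single_apply, (Fin.succ_ne_zero i), (Fin.succ_ne_zero k)]
              have h2 : (fun r : Fin m => (Pi.single i.succ 1 + Pi.single k.succ 1 : Fin (m+1) → ℕ) r.succ)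
                  = Pi.single i 1 + Pi.single k 1 := by
                funext r
                simp [Pi.single_apply, Fin.succ_inj]
              rw [h1, h2]
              simpa using dpow_pair (fun r : Fin m => D r.succ) tailD i k a

end dpow

section matrixlemmas
variable {K A : Type*} [Ring A] {n' n : ℕ}

lemma wt_single {n : ℕ} (i : Fin n) (m : ℕ) : wt (Pi.single i m) = m := by
  simp [wt, Finset.sum_pi_single']

lemma wt_add {n : ℕ} (α β : Fin n → ℕ) : wt (α + β) = wt α + wt β := by
  simp [wt, Finset.sum_add_distrib]

lemma mchoose_single {n : ℕ} (β : Fin n → ℕ) (q : Fin n) :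
    mchoose β (Pi.single q 1) = β q := by
  unfold mchoose
  rw [Finset.prod_eq_single q]
  · simp
  · intro r _ hr
    simp [Pi.single_apply, hr]
  · simp

lemma mfact_single {n : ℕ} (i : Fin n) (m : ℕ) :
    mfact (Pi.single i m) = m.factorial := by
  unfold mfact
  rw [Finset.prod_eq_single i]
  · simp
  · intro r _ hr
    simp [Pi.single_apply, hr]
  · simp

lemma single_add_self {n : ℕ} (i : Fin n) :
    (Pi.single i 1 + Pi.single i 1 : Fin n → ℕ) = Pi.single i 2 := by
  funext r
  simp [Pi.single_apply]
  split <;> simp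

lemma mfact_pair {n : ℕ} (i k : Fin n) :
    mfact (Pi.single i 1 + Pi.single k 1 : Fin n → ℕ) = if i = k then 2 else 1 := by
  by_cases h : i = k
  · subst h
    rw [single_add_self, mfact_single, if_pos rfl]
    decide
  · rw [if_neg h]
    unfold mfact
    apply Finset.prod_eq_one
    intro r _
    have : (Pi.single i 1 + Pi.single k 1 : Fin n → ℕ) r ≤ 1 := by
      simp only [Pi.add_apply, Pi.single_apply]
      split_ifs with h1 h2 <;> simp_all
    interval_cases h2 : ((Pi.single i 1 + Pi.single k 1 : Fin n → ℕ) r) <;> simp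

lemma pair_sub_left {n : ℕ} (i k : Fin n) :
    (Pi.single i 1 + Pi.single k 1 : Fin n → ℕ) - Pi.single i 1 = Pi.single k 1 := by
  funext r
  simp [Nat.add_sub_cancel_left]

lemma pair_sub_right {n : ℕ} (i k : Fin n) :
    (Pi.single i 1 + Pi.single k 1 : Fin n → ℕ) - Pi.single k 1 = Pi.single i 1 := by
  funext r
  simp

lemma single_eq_single_iff {n : ℕ} {i j : Fin n} :
    (Pi.single i 1 : Fin n → ℕ) = Pi.single j 1 ↔ i = j := by
  constructor
  · intro h
    by_contra hne
    have := congrFun h i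
    simp [Pi.single_apply, Ne.symm hne] at this
  · rintro rfl; rfl

lemma embedg_single (g : Fin n' → Fin n → A) (i : Fin n') (j : Fin n) :
    embedg g (Pi.single i 1) (Pi.single j 1) = g i j := by
  unfold embedg
  have key : ∀ p : Fin n', ∀ q : Fin n,
      (if (Pi.single i 1 : Fin n' → ℕ) = Pi.single p 1 ∧ (Pi.single j 1 : Fin n → ℕ) = Pi.single q 1
        then g p q else 0) = if i = p ∧ j = q then g p q else 0 := by
    intro p q
    simp [single_eq_single_iff]
  simp_rw [key, ite_and]
  simp

lemma single_le_pair {n : ℕ} {p i k : Fin n} :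
    (Pi.single p 1 : Fin n → ℕ) ≤ Pi.single i 1 + Pi.single k 1 ↔ p = i ∨ p = k := by
  constructor
  · intro h
    by_contra hc
    push_neg at hc
    have := h p
    simp [Pi.single_apply, Ne.symm hc.1, Ne.symm hc.2] at this
  · rintro (rfl | rfl)
    · intro r; exact Nat.le_add_right _ _
    · intro r; exact Nat.le_add_left _ _

lemma filter_wt_one {n : ℕ} (i k : Fin n) :
    (Finset.Iic (Pi.single i 1 + Pi.single k 1 : Fin n → ℕ)).filter (fun γ => wt γ = 1)
      = {Pi.single i 1, Pi.single k 1} := by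
  ext γ
  simp only [Finset.mem_filter, Finset.mem_Iic, Finset.mem_insert, Finset.mem_singleton]
  constructor
  · rintro ⟨hle, hwt⟩
    obtain ⟨p, rfl⟩ := eq_single_of_wt_eq_one hwt
    rcases single_le_pair.mp hle with rfl | rfl
    · exact Or.inl rfl
    · exact Or.inr rfl
  · rintro (rfl | rfl)
    · exact ⟨single_le_pair.mpr (Or.inl rfl), wt_single _ _⟩
    · exact ⟨single_le_pair.mpr (Or.inr rfl), wt_single _ _⟩

lemma dgEntry_eval (D : Fin n' → A → A) (g : Fin n' → Fin n → A) (i k : Fin n') (j : Fin n) :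
    dgEntry D g (Pi.single i 1 + Pi.single k 1) j =
      if i = k then D i (g k j) else D i (g k j) + D k (g i j) := by
  unfold dgEntry
  by_cases hik : i = k
  · subst hik
    rw [if_pos rfl]
    have key : ∀ p q : Fin n',
        (if (Pi.single i 1 + Pi.single i 1 : Fin n' → ℕ) = Pi.single p 1 + Pi.single q 1
          then D p (g q j) else 0) = if i = p ∧ i = q then D p (g q j) else 0 := by
      intro p q
      congr 1
      rw [pair_eq_pair]
      exact propext (by tauto)
    simp_rw [key, ite_and]
    simp
  · rw [if_neg hik]
    have key : ∀ p q : Fin n',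
        (if (Pi.single i 1 + Pi.single k 1 : Fin n' → ℕ) = Pi.single p 1 + Pi.single q 1
          then D p (g q j) else 0)
        = (if i = p ∧ k = q then D p (g q j) else 0)
          + (if i = q ∧ k = p then D p (g q j) else 0) := by
      intro p q
      by_cases h : (Pi.single i 1 + Pi.single k 1 : Fin n' → ℕ) = Pi.single p 1 + Pi.single q 1
      · rw [if_pos h]
        rcases pair_eq_pair.mp h with ⟨h1, h2⟩ | ⟨h1, h2⟩
        · have hne : ¬(i = q ∧ k = p) := by
            rintro ⟨rfl, rfl⟩; exact hik h1
          rw [if_pos ⟨h1, h2⟩, if_neg hne, add_zero]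
        · have hne : ¬(i = p ∧ k = q) := by
            rintro ⟨rfl, rfl⟩; exact hik h1
          rw [if_neg hne, if_pos ⟨h1, h2⟩, zero_add]
      · rw [if_neg h, if_neg, if_neg, add_zero]
        · rintro ⟨rfl, rfl⟩
          exact h (pair_eq_pair.mpr (Or.inr ⟨rfl, rfl⟩))
        · rintro ⟨rfl, rfl⟩
          exact h (pair_eq_pair.mpr (Or.inl ⟨rfl, rfl⟩))
    simp_rw [key, Finset.sum_add_distrib, ite_and]
    simp

end matrixlemmas


section symprodeval
variable {A : Type*} [Ring A] {n' n : ℕ}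

lemma symProd_pair (g : Fin n' → Fin n → A) (i k : Fin n') (j l : Fin n) :
    symProd 1 1 (embedg g) (embedg g)
        (Pi.single i 1 + Pi.single k 1) (Pi.single j 1 + Pi.single l 1)
      = ∑ γ' ∈ ({Pi.single i 1, Pi.single k 1} : Finset (Fin n' → ℕ)),
          ∑ γ ∈ ({Pi.single j 1, Pi.single l 1} : Finset (Fin n → ℕ)),
            (mchoose (Pi.single j 1 + Pi.single l 1) γ : A) * embedg g γ' γ *
              embedg g ((Pi.single i 1 + Pi.single k 1) - γ')
                ((Pi.single j 1 + Pi.single l 1) - γ) := by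
  unfold symProd
  rw [← filter_wt_one i k, ← filter_wt_one j l]
  rw [Finset.sum_filter]
  apply Finset.sum_congr rfl
  intro γ' _
  by_cases h1 : wt γ' = 1
  · rw [if_pos h1, Finset.sum_filter]
    apply Finset.sum_congr rfl
    intro γ _
    by_cases h2 : wt γ = 1 <;> simp [h1, h2]
  · rw [if_neg h1]
    apply Finset.sum_eq_zero
    intro γ _
    simp [h1]

end symprodeval


section betaterm
variable {K A : Type*} [Field K] [CharZero K] [Ring A] [Algebra K A] {n' n : ℕ}

lemma half_smul_add_self {x : A} : (2 : K)⁻¹ • (x + x) = x := by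
  rw [← two_smul K x, smul_smul, inv_mul_cancel₀ (two_ne_zero), one_smul]

lemma fiber_eq (j l : Fin n) :
    (Finset.univ ×ˢ Finset.univ).filter
        (fun p : Fin n × Fin n =>
          (Pi.single p.1 1 + Pi.single p.2 1 : Fin n → ℕ) = Pi.single j 1 + Pi.single l 1)
      = if j = l then {(j, j)} else {(j, l), (l, j)} := by
  ext ⟨p1, p2⟩
  by_cases h : j = l
  · subst h
    rw [if_pos rfl]
    simp only [Finset.mem_filter, Finset.mem_product, Finset.mem_univ, true_and, and_true,
      pair_eq_pair, Finset.mem_singleton, Prod.mk.injEq]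
    try tauto
  · rw [if_neg h]
    simp only [Finset.mem_filter, Finset.mem_product, Finset.mem_univ, true_and, and_true,
      pair_eq_pair, Finset.mem_insert, Finset.mem_singleton, Prod.mk.injEq]
    try tauto

lemma beta_term (δ : Fin n → A → A)
    (hdcomm : ∀ i j x, δ i (δ j x) = δ j (δ i x))
    (g : Fin n' → Fin n → A) (hcentral : ∀ i j x, g i j * x = x * g i j)
    (i k : Fin n') (j l : Fin n) (a : A) :
    ((2 : K)⁻¹ • symProd 1 1 (embedg g) (embedg g)
          (Pi.single i 1 + Pi.single k 1) (Pi.single j 1 + Pi.single l 1)) *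
        ((mfact (Pi.single j 1 + Pi.single l 1 : Fin n → ℕ) : K)⁻¹ •
          dpow δ (Pi.single j 1 + Pi.single l 1) a)
      = ∑ p ∈ (Finset.univ ×ˢ Finset.univ).filter
            (fun p : Fin n × Fin n =>
              (Pi.single p.1 1 + Pi.single p.2 1 : Fin n → ℕ) = Pi.single j 1 + Pi.single l 1),
          ((if i = k then (2 : K) else 1)⁻¹ • (g i p.1 * g k p.2 * δ p.1 (δ p.2 a))) := by
  rw [symProd_pair, dpow_pair δ hdcomm j l a, mfact_pair, fiber_eq]
  rw [smul_mul_smul_comm]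
  by_cases hjl : j = l
  · subst hjl
    rw [if_pos rfl, if_pos rfl, Finset.sum_singleton]
    have hset : ({Pi.single j 1, Pi.single j 1} : Finset (Fin n → ℕ)) = {Pi.single j 1} := by simp
    rw [hset]
    have hm : (mchoose (Pi.single j 1 + Pi.single j 1 : Fin n → ℕ) (Pi.single j 1) : A) = 2 := by
      rw [mchoose_single]
      norm_num [Pi.single_apply]
    by_cases hik : i = k
    · subst hik
      rw [if_pos rfl]
      have hset2 : ({Pi.single i 1, Pi.single i 1} : Finset (Fin n' → ℕ)) = {Pi.single i 1} := by
        simp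
      rw [hset2, Finset.sum_singleton, Finset.sum_singleton, hm]
      simp only [pair_sub_left, pair_sub_right, embedg_single, Nat.cast_ofNat]
      rw [show (2 : A) * g i j * g i j * δ j (δ j a)
          = g i j * g i j * δ j (δ j a) + g i j * g i j * δ j (δ j a) from by noncomm_ring]
      rw [← smul_smul, half_smul_add_self (K := K)]
    · rw [if_neg hik, Finset.sum_pair (fun h => hik (single_eq_single_iff.mp h)),
        Finset.sum_singleton, Finset.sum_singleton, hm]
      simp only [pair_sub_left, pair_sub_right, embedg_single, Nat.cast_ofNat, inv_one, one_smul]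
      have hc : g k j * g i j = g i j * g k j := hcentral k j (g i j)
      rw [show ((2 : A) * g i j * g k j + 2 * g k j * g i j) * δ j (δ j a)
          = (g i j * g k j * δ j (δ j a) + g i j * g k j * δ j (δ j a))
            + (g i j * g k j * δ j (δ j a) + g i j * g k j * δ j (δ j a)) from by
        rw [mul_assoc (2 : A) (g k j) (g i j), hc]; noncomm_ring]
      rw [← smul_smul, half_smul_add_self (K := K), half_smul_add_self (K := K)]
  · rw [if_neg hjl, if_neg hjl, Finset.sum_pair (fun h : ((j,l) : Fin n × Fin n) = (l,j) =>
      hjl (congrArg Prod.fst h))]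
    have hmj : (mchoose (Pi.single j 1 + Pi.single l 1 : Fin n → ℕ) (Pi.single j 1) : A) = 1 := by
      rw [mchoose_single]
      simp [Pi.single_apply, Ne.symm hjl]
    have hml : (mchoose (Pi.single j 1 + Pi.single l 1 : Fin n → ℕ) (Pi.single l 1) : A) = 1 := by
      rw [mchoose_single]
      simp [Pi.single_apply, hjl]
    by_cases hik : i = k
    · subst hik
      rw [if_pos rfl]
      have hset2 : ({Pi.single i 1, Pi.single i 1} : Finset (Fin n' → ℕ)) = {Pi.single i 1} := by
        simp
      rw [hset2, Finset.sum_singleton,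
        Finset.sum_pair (fun h => hjl (single_eq_single_iff.mp h)), hmj, hml]
      simp only [pair_sub_left, pair_sub_right, embedg_single, Nat.cast_one, inv_one, one_smul,
        one_mul, mul_one]
      have hd : δ l (δ j a) = δ j (δ l a) := hdcomm l j a
      rw [hd, ← smul_add]
      congr 1
      noncomm_ring
    · rw [if_neg hik, Finset.sum_pair (fun h => hik (single_eq_single_iff.mp h))]
      rw [Finset.sum_pair (fun h => hjl (single_eq_single_iff.mp h)),
        Finset.sum_pair (fun h => hjl (single_eq_single_iff.mp h)), hmj, hml]
      simp only [pair_sub_left, pair_sub_right, embedg_single, Nat.cast_one, inv_one, one_smul,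
        one_mul, mul_one]
      have hd : δ l (δ j a) = δ j (δ l a) := hdcomm l j a
      have hc1 : g k j * g i l = g i l * g k j := hcentral k j (g i l)
      have hc2 : g k l * g i j = g i j * g k l := hcentral k l (g i j)
      rw [hd, hc1, hc2]
      rw [show (g i j * g k l + g i l * g k j + (g i l * g k j + g i j * g k l)) * δ j (δ l a)
          = (g i j * g k l * δ j (δ l a) + g i l * g k j * δ j (δ l a))
            + (g i j * g k l * δ j (δ l a) + g i l * g k j * δ j (δ l a)) from by noncomm_ring]
      rw [half_smul_add_self (K := K)]

end betaterm

/-- The `m = 2` case of the chain rule of Theorem 2.4: for commuting families of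
derivations `∂ = (∂^1,…,∂^{n'})`, `δ = (δ^1,…,δ^n)` of an associative unital
algebra `A` over a field of characteristic zero, with `∂ = gδ` for a matrix `g`
with central entries satisfying `∂^k gⁱⱼ = ∂^i gᵏⱼ`, one has
`∂^{⊙2}/2! = ((∂⊙g)/2!)·δ + (g^{⊙2}/2!)·(δ^{⊙2}/2!)`, entrywise at each row
multi-index `α'` of weight `2`. -/
theorem chain_rule_symPow_two {K A : Type*} [Field K] [CharZero K]
    [Ring A] [Algebra K A] {n' n : ℕ}
    (D : Fin n' → A → A) (δ : Fin n → A → A)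
    (hDadd : ∀ i x y, D i (x + y) = D i x + D i y)
    (hDmul : ∀ i x y, D i (x * y) = D i x * y + x * D i y)
    (hDcomm : ∀ i j x, D i (D j x) = D j (D i x))
    (hdadd : ∀ i x y, δ i (x + y) = δ i x + δ i y)
    (hdmul : ∀ i x y, δ i (x * y) = δ i x * y + x * δ i y)
    (hdcomm : ∀ i j x, δ i (δ j x) = δ j (δ i x))
    (g : Fin n' → Fin n → A)
    (hcentral : ∀ i j x, g i j * x = x * g i j)
    (hfactor : ∀ i x, D i x = ∑ j, g i j * δ j x)
    (hsym : ∀ i k j, D k (g i j) = D i (g k j)) :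
    ∀ α' : Fin n' → ℕ, wt α' = 2 → ∀ a : A,
      ((mfact α' : K)⁻¹) • dpow D α' a =
        ((2 : K))⁻¹ • (∑ j, dgEntry D g α' j * δ j a) +
          ∑ β ∈ wtSet n 2,
            (((2 : K))⁻¹ • symProd 1 1 (embedg g) (embedg g) α' β) *
              (((mfact β : K)⁻¹) • dpow δ β a) := by
  intro α' hwtα a
  obtain ⟨i, k, rfl⟩ := exists_pair_of_wt_eq_two hwtα
  have D0 : ∀ p, D p 0 = 0 := by
    intro p
    have h := hDadd p 0 0
    rw [add_zero] at h
    exact add_eq_right.mp h.symm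
  have Dsum : ∀ (p : Fin n') (s : Finset (Fin n)) (f : Fin n → A),
      D p (∑ x ∈ s, f x) = ∑ x ∈ s, D p (f x) := by
    intro p s f
    induction s using Finset.cons_induction with
    | empty => simpa using D0 p
    | cons x s hx ih => rw [Finset.sum_cons, hDadd, ih, Finset.sum_cons]
  rw [dpow_pair D hDcomm i k a, mfact_pair]
  have hcast : (((if i = k then 2 else 1 : ℕ)) : K) = if i = k then (2 : K) else 1 := by
    split_ifs <;> simp
  rw [hcast]
  have hexp : D i (D k a) = (∑ j0, D i (g k j0) * δ j0 a)
      + ∑ j0, ∑ l0, g i j0 * g k l0 * δ j0 (δ l0 a) := by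
    rw [hfactor k a, Dsum i]
    have step : ∀ j0 : Fin n, D i (g k j0 * δ j0 a)
        = D i (g k j0) * δ j0 a + ∑ l0, g i l0 * g k j0 * δ l0 (δ j0 a) := by
      intro j0
      rw [hDmul i, hfactor i (δ j0 a), Finset.mul_sum]
      congr 1
      apply Finset.sum_congr rfl
      intro l0 _
      rw [← mul_assoc, hcentral k j0 (g i l0)]
    simp_rw [step]
    rw [Finset.sum_add_distrib]
    congr 1
    exact Finset.sum_comm
  have hT1 : (2 : K)⁻¹ • (∑ j0, dgEntry D g (Pi.single i 1 + Pi.single k 1) j0 * δ j0 a)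
      = (if i = k then (2 : K) else 1)⁻¹ • ∑ j0, D i (g k j0) * δ j0 a := by
    simp_rw [dgEntry_eval]
    by_cases hik : i = k
    · subst hik
      simp
    · simp only [if_neg hik]
      rw [inv_one, one_smul]
      have hsplit : ∑ j0, (D i (g k j0) + D k (g i j0)) * δ j0 a
          = (∑ j0, D i (g k j0) * δ j0 a) + ∑ j0, D i (g k j0) * δ j0 a := by
        rw [← Finset.sum_add_distrib]
        apply Finset.sum_congr rfl
        intro j0 _
        rw [hsym i k j0, add_mul]
      rw [hsplit, half_smul_add_self (K := K)]
  have hmaps : ∀ p ∈ (Finset.univ ×ˢ Finset.univ : Finset (Fin n × Fin n)),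
      (Pi.single p.1 1 + Pi.single p.2 1 : Fin n → ℕ) ∈ wtSet n 2 := by
    intro p _
    simp only [wtSet, Finset.mem_filter, Finset.mem_Iic]
    constructor
    · intro r
      simp only [Pi.add_apply, Pi.single_apply]
      split_ifs <;> omega
    · rw [wt_add, wt_single, wt_single]
  have hfib := Finset.sum_fiberwise_of_maps_to hmaps
    (fun p : Fin n × Fin n =>
      ((if i = k then (2 : K) else 1)⁻¹ • (g i p.1 * g k p.2 * δ p.1 (δ p.2 a))))
  have hT2 : ∑ β ∈ wtSet n 2,
        (((2 : K))⁻¹ • symProd 1 1 (embedg g) (embedg g) (Pi.single i 1 + Pi.single k 1) β) *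
          (((mfact β : K)⁻¹) • dpow δ β a)
      = (if i = k then (2 : K) else 1)⁻¹ •
          ∑ j0, ∑ l0, g i j0 * g k l0 * δ j0 (δ l0 a) := by
    have hps : ∑ p ∈ (Finset.univ ×ˢ Finset.univ : Finset (Fin n × Fin n)),
          ((if i = k then (2 : K) else 1)⁻¹ • (g i p.1 * g k p.2 * δ p.1 (δ p.2 a)))
        = (if i = k then (2 : K) else 1)⁻¹ •
            ∑ j0, ∑ l0, g i j0 * g k l0 * δ j0 (δ l0 a) := by
      rw [← Finset.smul_sum, Finset.sum_product]
    rw [← hps, ← hfib]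
    apply Finset.sum_congr rfl
    intro β hβ
    have hwtβ : wt β = 2 := (Finset.mem_filter.mp hβ).2
    obtain ⟨j0, l0, rfl⟩ := exists_pair_of_wt_eq_two hwtβ
    exact beta_term δ hdcomm g hcentral i k j0 l0 a
  rw [hexp, smul_add, ← hT1, hT2]
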